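/- arXiv:2512.21140 — 2 statements merged into one kernel-verified Lean document; each statement's English description precedes it below -/
import Mathlib

section
/- If I contains an unbounded subset of κ, then every basis of the I-topology on ν^κ has cardinality at least 2^κ, hence the weight of (ν^κ, τ_I) equals 2^κ; moreover the number of I-open sets equals 2^{2^κ}. -/
open Set Cardinal TopologicalSpace

/-- A κ-complete proper ideal on κ extending the ideal of bounded sets. -/
structure IsGoodIdeal (κ : Type) [LinearOrder κ] (I : Set (Set κ)) : Prop where
  lower : ∀ ⦃A B : Set κ⦄, A ⊆ B → B ∈ I → A ∈ I
  complete : ∀ J : Set (Set κ), J ⊆ I → #J < #κ → ⋃₀ J ∈ I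
  proper : (Set.univ : Set κ) ∉ I
  bounded_mem : ∀ s : Set κ, Set.Bounded (· < ·) s → s ∈ I

/-- The basic cone `N_f` determined by the restriction of `f` to `D`. -/
def cone {κ ν : Type} (D : Set κ) (f : κ → ν) : Set (κ → ν) :=
  {x | ∀ α ∈ D, x α = f α}

/-- The ideal topology `τ_I` on `ν^κ`. -/
def idealTop {κ : Type} (I : Set (Set κ)) (ν : Type) : TopologicalSpace (κ → ν) :=
  TopologicalSpace.generateFrom {S | ∃ D ∈ I, ∃ f : κ → ν, S = cone D f}

/-- The bounded topology `τ_b` on `ν^κ`. -/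
def boundedTop (κ ν : Type) [LinearOrder κ] : TopologicalSpace (κ → ν) :=
  TopologicalSpace.generateFrom
    {S | ∃ D : Set κ, Set.Bounded (· < ·) D ∧ ∃ f : κ → ν, S = cone D f}

section Aux
variable {κ ν : Type} [LinearOrder κ] {I : Set (Set κ)}

lemma mem_cone_self (D : Set κ) (x : κ → ν) : x ∈ cone D x := fun _ _ => rfl

lemma cone_eq_of_mem {D : Set κ} {f x : κ → ν} (hx : x ∈ cone D f) :
    cone D f = cone D x := by
  ext y; constructor <;> intro hy α hα
  · rw [hy α hα, hx α hα]
  · rw [hy α hα, ← hx α hα]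

lemma union_mem (hI : IsGoodIdeal κ I) (hunc : ℵ₀ < #κ) {A B : Set κ}
    (hA : A ∈ I) (hB : B ∈ I) : A ∪ B ∈ I := by
  have := hI.complete {A, B} (by rintro x (rfl | rfl) <;> assumption)
    (lt_of_lt_of_le ((Set.toFinite ({A, B} : Set (Set κ))).lt_aleph0) hunc.le)
  rwa [Set.sUnion_pair] at this

lemma key_nhds (hI : IsGoodIdeal κ I) (hunc : ℵ₀ < #κ) (hne : (∅ : Set κ) ∈ I)
    {u : Set (κ → ν)}
    (hu : TopologicalSpace.GenerateOpen {S | ∃ D ∈ I, ∃ f : κ → ν, S = cone D f} u) :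
    ∀ a ∈ u, ∃ D ∈ I, cone D a ⊆ u := by
  induction hu with
  | basic S hS =>
    intro a ha
    obtain ⟨D, hD, f, rfl⟩ := hS
    exact ⟨D, hD, by rw [cone_eq_of_mem ha]⟩
  | univ => exact fun a _ => ⟨∅, hne, subset_univ _⟩
  | inter u v _ _ ihu ihv =>
    intro a ha
    obtain ⟨D, hD, hDs⟩ := ihu a ha.1
    obtain ⟨E, hE, hEs⟩ := ihv a ha.2
    refine ⟨D ∪ E, union_mem hI hunc hD hE, fun x hx => ⟨hDs ?_, hEs ?_⟩⟩ <;>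
      exact fun α hα => hx α (by simp [hα])
  | sUnion S _ ih =>
    rintro a ⟨t, ht, hat⟩
    obtain ⟨D, hD, hDs⟩ := ih t ht a hat
    exact ⟨D, hD, hDs.trans (subset_sUnion_of_mem ht)⟩

lemma isBasis_cones (hI : IsGoodIdeal κ I) (hunc : ℵ₀ < #κ) (hne : (∅ : Set κ) ∈ I) :
    @TopologicalSpace.IsTopologicalBasis (κ → ν) (idealTop I ν)
      {S | ∃ D ∈ I, ∃ f : κ → ν, S = cone D f} := by
  letI := idealTop I ν
  refine isTopologicalBasis_of_isOpen_of_nhds (fun u hu => .basic u hu) ?_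
  intro a u ha hu
  obtain ⟨D, hD, hsub⟩ := key_nhds hI hunc hne hu a ha
  exact ⟨cone D a, ⟨D, hD, a, rfl⟩, mem_cone_self D a, hsub⟩

end Aux

/-- if `I` contains an unbounded set, every basis of `τ_I` has size at least
`2^κ`, the weight is exactly `2^κ`, and there are exactly `2^(2^κ)` many `I`-open sets. -/
theorem stmt_7 (κ ν : Type) [LinearOrder κ]
    (hreg : (#κ).IsRegular) (hunc : ℵ₀ < #κ) (hν : #ν = 2 ∨ #ν = #κ)
    (I : Set (Set κ)) (hI : IsGoodIdeal κ I)
    (hU : ∃ U ∈ I, ¬ Set.Bounded (· < ·) U) :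
    (∀ B : Set (Set (κ → ν)),
        @TopologicalSpace.IsTopologicalBasis _ (idealTop I ν) B →
        (2 : Cardinal) ^ #κ ≤ #↥B) ∧
    (∃ B : Set (Set (κ → ν)),
        @TopologicalSpace.IsTopologicalBasis _ (idealTop I ν) B ∧
        #↥B ≤ (2 : Cardinal) ^ #κ) ∧
    #↥{S : Set (κ → ν) | @IsOpen _ (idealTop I ν) S} =
      (2 : Cardinal) ^ ((2 : Cardinal) ^ #κ) := by
  letI := idealTop I ν
  obtain ⟨U, hUI, hUb⟩ := hU
  have hκinf : ℵ₀ ≤ #κ := hunc.le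
  have hne : (∅ : Set κ) ∈ I := hI.lower (Set.empty_subset U) hUI
  -- ν is nonempty
  have hν2 : (2 : Cardinal) ≤ #ν := by
    rcases hν with h | h
    · exact h.ge
    · rw [h]; exact (Cardinal.nat_lt_aleph0 2).le.trans hκinf
  haveI hνne : Nonempty ν := Cardinal.mk_ne_zero_iff.mp (by positivity)
  -- powers
  have hpow : ∀ c : Cardinal, c = #κ → #ν ^ c = 2 ^ #κ := by
    rintro c rfl
    rcases hν with h | h
    · rw [h]
    · rw [h, Cardinal.power_self_eq hκinf]
  -- unbounded: ∀ a, ∃ b ∈ U, a ≤ b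
  have hUb' : ∀ a : κ, ∃ b ∈ U, a ≤ b := by
    intro a
    by_contra hcon
    push_neg at hcon
    exact hUb ⟨a, hcon⟩
  -- #U = #κ
  have hUcard : #U = #κ := by
    refine le_antisymm (Cardinal.mk_set_le U) ?_
    by_contra hlt
    push_neg at hlt
    set J : Set (Set κ) := Set.range (fun b : U => {y : κ | y ≤ (b : κ)}) with hJ
    have hJI : J ⊆ I := by
      rintro _ ⟨b, rfl⟩
      have heq : {y : κ | y ≤ (b : κ)} = {y : κ | y < (b : κ)} ∪ {(b : κ)} := by
        ext y; simp [le_iff_lt_or_eq, or_comm]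
      show {y : κ | y ≤ (b : κ)} ∈ I
      rw [heq]
      exact union_mem hI hunc (hI.bounded_mem _ ⟨(b : κ), fun x hx => hx⟩)
        (hI.lower (by simpa using b.2) hUI)
    have hsU : ⋃₀ J = Set.univ := by
      ext x
      simp only [Set.mem_sUnion, Set.mem_univ, iff_true]
      obtain ⟨b, hb, hxb⟩ := hUb' x
      exact ⟨{y | y ≤ b}, ⟨⟨b, hb⟩, rfl⟩, hxb⟩
    have : ⋃₀ J ∈ I := hI.complete J hJI ((Cardinal.mk_range_le).trans_lt hlt)
    rw [hsU] at this
    exact hI.proper this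
  -- the family of cones
  classical
  let extfun : (U → ν) → (κ → ν) := fun h α =>
    if hα : α ∈ U then h ⟨α, hα⟩ else Classical.arbitrary ν
  let C : (U → ν) → Set (κ → ν) := fun h => cone U (extfun h)
  have hmemC : ∀ h, extfun h ∈ C h := fun h => mem_cone_self U (extfun h)
  have hopenC : ∀ h, IsOpen (C h) := fun h => .basic _ ⟨U, hUI, extfun h, rfl⟩
  have hagree : ∀ h h' : U → ν, extfun h ∈ C h' → h = h' := by
    intro h h' hmem
    funext b
    have h1 := hmem (b : κ) b.2
    simpa only [extfun, dif_pos b.2, Subtype.coe_eta] using h1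
  have hdisj : ∀ h h' : U → ν, ∀ x, x ∈ C h → x ∈ C h' → h = h' := by
    intro h h' x hx hx'
    apply hagree
    intro α hα
    calc extfun h α = x α := (hx α hα).symm
      _ = extfun h' α := hx' α hα
  have hcardU : #(U → ν) = 2 ^ #κ := by
    rw [← Cardinal.power_def, hUcard]; exact hpow _ rfl
  refine ⟨?_, ?_, ?_⟩
  · -- every basis has size ≥ 2^κ
    intro B hB
    have hex : ∀ h : U → ν, ∃ v : B, extfun h ∈ (v : Set (κ → ν)) ∧ (v : Set (κ → ν)) ⊆ C h := by
      intro h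
      obtain ⟨v, hvB, hv1, hv2⟩ := hB.exists_subset_of_mem_open (hmemC h) (hopenC h)
      exact ⟨⟨v, hvB⟩, hv1, hv2⟩
    choose F hF1 hF2 using hex
    have hFinj : Function.Injective F := by
      intro h h' hFe
      have h1 : extfun h ∈ C h := hF2 h (hF1 h)
      have h2 : extfun h ∈ C h' := hF2 h' (by rw [← hFe]; exact hF1 h)
      exact hdisj h h' (extfun h) h1 h2
    calc (2 : Cardinal) ^ #κ = #(U → ν) := hcardU.symm
      _ ≤ #B := Cardinal.mk_le_of_injective hFinj
  · -- existence of small basis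
    refine ⟨{S | ∃ D ∈ I, ∃ f : κ → ν, S = cone D f}, isBasis_cones hI hunc hne, ?_⟩
    have hsub : {S | ∃ D ∈ I, ∃ f : κ → ν, S = cone D f} ⊆
        Set.range (fun p : Set κ × (κ → ν) => cone p.1 p.2) := by
      rintro S ⟨D, _, f, rfl⟩; exact ⟨(D, f), rfl⟩
    calc #↥{S | ∃ D ∈ I, ∃ f : κ → ν, S = cone D f}
        ≤ #↥(Set.range (fun p : Set κ × (κ → ν) => cone p.1 p.2)) :=
          Cardinal.mk_le_mk_of_subset hsub
      _ ≤ #(Set κ × (κ → ν)) := Cardinal.mk_range_le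
      _ = 2 ^ #κ * 2 ^ #κ := by
          simp only [Cardinal.mk_prod, Cardinal.lift_id, Cardinal.mk_set]
          rw [← Cardinal.power_def]
          rw [hpow _ rfl]
      _ = 2 ^ #κ := Cardinal.mul_eq_self (hκinf.trans (Cardinal.cantor _).le)
  · -- number of open sets
    refine le_antisymm ?_ ?_
    · calc #↥{S : Set (κ → ν) | IsOpen S} ≤ #(Set (κ → ν)) := Cardinal.mk_set_le _
        _ = 2 ^ #(κ → ν) := Cardinal.mk_set
        _ = 2 ^ ((2 : Cardinal) ^ #κ) := by rw [← Cardinal.power_def, hpow _ rfl]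
    · -- injection from Set (U → ν)
      have hΨ : ∀ A : Set (U → ν), IsOpen (⋃ h ∈ A, C h) :=
        fun A => isOpen_biUnion (fun h _ => hopenC h)
      have hmono : ∀ A A' : Set (U → ν), (⋃ h ∈ A, C h) ⊆ (⋃ h ∈ A', C h) → A ⊆ A' := by
        intro A A' hsub h hA
        have : extfun h ∈ ⋃ h' ∈ A', C h' := hsub (Set.mem_biUnion hA (hmemC h))
        obtain ⟨h', hh', hmem⟩ := by simpa using this
        rwa [hagree h h' hmem]
      have hinj : Function.Injective
          (fun A : Set (U → ν) => (⟨⋃ h ∈ A, C h, hΨ A⟩ :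
            {S : Set (κ → ν) // IsOpen S})) := by
        intro A A' hAA
        have := Subtype.mk_eq_mk.mp hAA
        exact le_antisymm (hmono A A' this.le) (hmono A' A this.ge)
      calc (2 : Cardinal) ^ ((2 : Cardinal) ^ #κ) = 2 ^ #(U → ν) := by rw [hcardU]
        _ = #(Set (U → ν)) := Cardinal.mk_set.symm
        _ ≤ #↥{S : Set (κ → ν) | IsOpen S} := Cardinal.mk_le_of_injective hinj
end

section
/- Suppose I contains an unbounded subset of κ. Then the class of I-analytic subsets of ν^κ is closed under unions of size at most 2^κ. Consequently, every subset of ν^κ is I-analytic. -/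
open Set Cardinal TopologicalSpace

/-- `A ⊆ ν^κ` is `I`-analytic: empty or an `I`-continuous image of an `I`-closed
subset of `κ^κ`. -/
def IAnalytic {κ : Type} (I : Set (Set κ)) (ν : Type) (A : Set (κ → ν)) : Prop :=
  A = ∅ ∨ ∃ (C : Set (κ → κ)) (Φ : (κ → κ) → (κ → ν)),
    @IsClosed _ (idealTop I κ) C ∧
    @Continuous _ _ (idealTop I κ) (idealTop I ν) Φ ∧ Φ '' C = A

open Topology

/-!
An unbounded set `U ∈ I` has size `κ`: otherwise `U` and the initial segments `Iio b`, `b ∈ U`,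
would be fewer than `κ` members of `I` covering `κ`. Every map factoring through restriction to
`U` is `I`-continuous, and `κ^U` has size `κ^κ ≥ |ν^κ|`, so every nonempty `A ⊆ ν^κ` is an
`I`-continuous image of the whole space `κ^κ`. Closure under unions follows at once.
-/

theorem isOpen_cone {κ ν : Type} {I : Set (Set κ)} {D : Set κ} (hD : D ∈ I) (f : κ → ν) :
    IsOpen[idealTop I ν] (cone D f) :=
  isOpen_generateFrom_of_mem ⟨D, hD, f, rfl⟩

theorem continuous_comp_restrict {κ μ X : Type} [TopologicalSpace X] {I : Set (Set κ)}
    {D : Set κ} (hD : D ∈ I) (Ψ : (D → μ) → X) :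
    Continuous[idealTop I μ, _] (Ψ ∘ Subtype.restrict (· ∈ D)) := by
  refine @continuous_def _ _ (idealTop I μ) _ _ |>.mpr fun S _ => ?_
  have hcover : (Ψ ∘ Subtype.restrict (· ∈ D)) ⁻¹' S =
      ⋃ x ∈ (Ψ ∘ Subtype.restrict (· ∈ D)) ⁻¹' S, cone D x := by
    ext y
    simp only [mem_iUnion, mem_preimage, exists_prop]
    refine ⟨fun hy => ⟨y, hy, fun _ _ => rfl⟩, fun ⟨x, hx, hyx⟩ => ?_⟩
    have hres : Subtype.restrict (· ∈ D) y = Subtype.restrict (· ∈ D) x :=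
      funext fun α => hyx α α.2
    simpa [Function.comp_apply, hres] using hx
  rw [hcover]
  exact @isOpen_biUnion _ _ (idealTop I μ) _ _ fun x _ => isOpen_cone hD x

theorem IsGoodIdeal.mk_eq_of_not_bounded {κ : Type} [LinearOrder κ] {I : Set (Set κ)}
    (hI : IsGoodIdeal κ I) (hκ : ℵ₀ ≤ #κ) {U : Set κ} (hUI : U ∈ I)
    (hUb : ¬ Set.Bounded (· < ·) U) : #U = #κ := by
  refine le_antisymm (mk_set_le U) (not_lt.mp fun hlt => hI.proper ?_)
  set J : Set (Set κ) := insert U (Iio '' U)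
  have hJI : J ⊆ I := by
    rintro S (rfl | ⟨b, -, rfl⟩)
    · exact hUI
    · exact hI.bounded_mem _ ⟨b, fun _ hx => hx⟩
  have hJcard : #J < #κ :=
    calc #J ≤ #(Iio '' U) + 1 := mk_insert_le
      _ ≤ #U + 1 := add_le_add_left mk_image_le 1
      _ < #κ := add_lt_of_lt hκ hlt (one_lt_aleph0.trans_le hκ)
  have hcover : ⋃₀ J = Set.univ := by
    refine Set.eq_univ_of_forall fun a => ?_
    obtain ⟨b, hbU, hab⟩ : ∃ b ∈ U, ¬ b < a := by
      by_contra! h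
      exact hUb ⟨a, h⟩
    rcases (not_lt.mp hab).eq_or_lt with rfl | hab
    · exact ⟨U, mem_insert _ _, hbU⟩
    · exact ⟨Iio b, mem_insert_of_mem _ ⟨b, hbU, rfl⟩, hab⟩
  exact hcover ▸ hI.complete J hJI hJcard

theorem iAnalytic_of_mk_le {κ ν : Type} {I : Set (Set κ)} [Nonempty κ] {D : Set κ} (hD : D ∈ I)
    {A : Set (κ → ν)} (hA : #A ≤ #(D → κ)) : IAnalytic I ν A := by
  rcases A.eq_empty_or_nonempty with rfl | hAne
  · exact Or.inl rfl
  have := hAne.to_subtype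
  obtain ⟨e⟩ := hA
  set g : (D → κ) → A := Function.invFun e
  refine Or.inr ⟨Set.univ, Subtype.val ∘ g ∘ Subtype.restrict (· ∈ D),
    @isClosed_univ _ (idealTop I κ), ?_, ?_⟩
  · exact @continuous_comp_restrict _ _ _ (idealTop I ν) _ _ hD (Subtype.val ∘ g)
  rw [image_univ, range_comp, range_comp,
    (Subtype.surjective_restrict (β := fun _ => κ) _).range_eq,
    image_univ, (Function.invFun_surjective e.injective).range_eq, image_univ,
    Subtype.range_coe]

theorem stmt_16_general (κ ν : Type) [LinearOrder κ]
    (hunc : ℵ₀ < #κ) (hν : #ν = 2 ∨ #ν = #κ)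
    (I : Set (Set κ)) (hI : IsGoodIdeal κ I)
    (hU : ∃ U ∈ I, ¬ Set.Bounded (· < ·) U) :
    (∀ (ι : Type) (A : ι → Set (κ → ν)), #ι ≤ (2 : Cardinal) ^ #κ →
        (∀ i, IAnalytic I ν (A i)) → IAnalytic I ν (⋃ i, A i)) ∧
    (∀ A : Set (κ → ν), IAnalytic I ν A) := by
  obtain ⟨U, hUI, hUb⟩ := hU
  have hUcard : #U = #κ := hI.mk_eq_of_not_bounded hunc.le hUI hUb
  have hνκ : #ν ≤ #κ := by
    rcases hν with h | h
    · exact h ▸ natCast_lt_aleph0.le.trans hunc.le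
    · exact h.le
  have : Nonempty κ := mk_ne_zero_iff.mp (aleph0_pos.trans hunc).ne'
  have hall : ∀ A : Set (κ → ν), IAnalytic I ν A := fun A =>
    iAnalytic_of_mk_le hUI <|
      calc #A ≤ #(κ → ν) := mk_set_le A
        _ = #ν ^ #κ := (power_def ν κ).symm
        _ ≤ #κ ^ #κ := power_le_power_right hνκ
        _ = #κ ^ #U := by rw [hUcard]
        _ = #(U → κ) := power_def κ U
  exact ⟨fun _ _ _ _ => hall _, hall⟩

/-- if `I` contains an unbounded set, the `I`-analytic sets are closed
under unions of size at most `2^κ`; consequently every subset of `ν^κ` is `I`-analytic. -/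
theorem stmt_16 (κ ν : Type) [LinearOrder κ]
    (hreg : (#κ).IsRegular) (hunc : ℵ₀ < #κ) (hν : #ν = 2 ∨ #ν = #κ)
    (I : Set (Set κ)) (hI : IsGoodIdeal κ I)
    (hU : ∃ U ∈ I, ¬ Set.Bounded (· < ·) U) :
    (∀ (ι : Type) (A : ι → Set (κ → ν)), #ι ≤ (2 : Cardinal) ^ #κ →
        (∀ i, IAnalytic I ν (A i)) → IAnalytic I ν (⋃ i, A i)) ∧
    (∀ A : Set (κ → ν), IAnalytic I ν A) :=
  stmt_16_general κ ν hunc hν I hI hU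
end
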